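/- Let X be a Noetherian scheme and W ⊆ X a closed subscheme containing no associated point of X, and suppose W is contained in an effective Cartier divisor (g = 0). Then there are only finitely many points x ∈ W such that the local pair (x, X_x) is not normal; namely, every such x is either a generic point of (g=0) or an associated point of the subscheme (g = 0). -/

import Mathlib

/-!
A point `p ∈ W` lies on `(g = 0)`, and `g` stays a nonzerodivisor in the maximal ideal of `R_p`.
If `p` is not an associated prime of `R/(g)`, then the maximal ideal of `R_p` is not an
associated prime of `R_p/(g)`, i.e. `depth R_p ≥ 2`. Such a local ring is a normal pair: a finite
modification `R_p → S` is injective because its kernel is killed by a power of `g`; if it were not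
surjective, some `s ∉ R_p` would have `m s ⊆ R_p`, and writing `g s = x` either the class of `x`
in `R_p/(g)` or `s - x/g` would be a nonzero element killed by `m`, making `m` associated to
`R_p/(g)` or to `S`. Hence the non-normal points are among the finitely many associated primes of
`R/(g)`.
-/

/-- A Noetherian-style notion: the local pair (m, Spec R) is normal, i.e. every finite
modification centered at the closed point (a finite ring map whose kernel and cokernel
are killed by a power of m and such that m is not an associated prime of the target)
is an isomorphism. -/
def IsNormalPairLocal (R : Type) [CommRing R] [IsLocalRing R] : Prop :=
  ∀ (S : Type) (_ : CommRing S) (φ : R →+* S),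
    (letI := φ.toAlgebra; Module.Finite R S) →
    (∃ n : ℕ,
      (∀ x ∈ RingHom.ker φ, ∀ y ∈ (IsLocalRing.maximalIdeal R) ^ n, y * x = 0) ∧
      (∀ s : S, ∀ y ∈ (IsLocalRing.maximalIdeal R) ^ n, φ y * s ∈ φ.range)) →
    (letI := φ.toAlgebra; IsLocalRing.maximalIdeal R ∉ associatedPrimes R S) →
    Function.Bijective φ

open IsLocalRing

theorem Ideal.IsMaximal.mem_associatedPrimes_of_forall_smul_eq_zero {A M : Type*}
    [CommSemiring A] [AddCommMonoid M] [Module A M] {m : Ideal A} (hm : m.IsMaximal) {x : M}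
    (hx : x ≠ 0) (hmx : ∀ a ∈ m, a • x = 0) : m ∈ associatedPrimes A M := by
  have hcolon : (⊥ : Submodule A M).colon {x} = m := by
    refine (hm.eq_of_le (fun htop => hx ?_) fun a ha => ?_).symm
    · simpa using (Submodule.mem_colon_singleton.mp ((Ideal.eq_top_iff_one _).mp htop))
    · simpa [Submodule.mem_colon_singleton] using hmx a ha
  exact ⟨hm.isPrime, x, by rw [hcolon, hm.isPrime.radical]⟩

theorem Submodule.exists_notMem_forall_smul_mem {A M : Type*} [CommSemiring A] [AddCommMonoid M]
    [Module A M] {I : Ideal A} {N : Submodule A M} (n : ℕ) {s : M} (hs : s ∉ N)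
    (hIs : ∀ y ∈ I ^ n, y • s ∈ N) : ∃ t ∉ N, ∀ y ∈ I, y • t ∈ N := by
  induction n generalizing s with
  | zero => exact absurd (by simpa using hIs 1 (by simp)) hs
  | succ n ih =>
    by_cases h : ∀ y ∈ I, y • s ∈ N
    · exact ⟨s, hs, h⟩
    push Not at h
    obtain ⟨y, hy, hys⟩ := h
    refine ih hys fun z hz => ?_
    rw [smul_smul]
    exact hIs _ (by rw [pow_succ]; exact Ideal.mul_mem_mul hz hy)

theorem exists_ne_zero_forall_smul_eq_zero_of_notMem_one {A S : Type*} [CommRing A] [CommRing S]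
    [Algebra A S] (hinj : Function.Injective (algebraMap A S)) {I : Ideal A} {h : A}
    (hh : h ∈ nonZeroDivisors A) (hI : h ∈ I) {s : S} (hs : s ∉ (1 : Submodule A S))
    (hIs : ∀ y ∈ I, y • s ∈ (1 : Submodule A S)) :
    (∃ x : A ⧸ Ideal.span {h}, x ≠ 0 ∧ ∀ y ∈ I, y • x = 0) ∨
      ∃ t : S, t ≠ 0 ∧ ∀ y ∈ I, y • t = 0 := by
  simp only [Submodule.mem_one, Algebra.smul_def] at hs hIs
  obtain ⟨x, hx⟩ := hIs h hI
  by_cases hxh : x ∈ Ideal.span {h}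
  · obtain ⟨a, rfl⟩ := Ideal.mem_span_singleton'.mp hxh
    refine .inr ⟨s - algebraMap A S a, fun h0 => hs ⟨a, (sub_eq_zero.mp h0).symm⟩, fun y hy => ?_⟩
    obtain ⟨c, hc⟩ := hIs y hy
    have hhc : h * (c - y * a) = 0 := hinj <| by
      simp only [map_mul, map_sub, map_zero, hc] at hx ⊢
      linear_combination -(algebraMap A S y) * hx
    rw [Algebra.smul_def, mul_sub, ← hc, ← map_mul, ← map_sub,
      mem_nonZeroDivisors_iff_left.mp hh _ hhc, map_zero]
  · refine .inl ⟨Ideal.Quotient.mk _ x, by rwa [ne_eq, Ideal.Quotient.eq_zero_iff_mem],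
      fun y hy => ?_⟩
    obtain ⟨c, hc⟩ := hIs y hy
    have hyx : y * x = h * c := hinj <| by
      simp only [map_mul, hc, hx]
      ring
    rw [Algebra.smul_def, Ideal.Quotient.algebraMap_eq, ← map_mul, Ideal.Quotient.eq_zero_iff_mem,
      hyx]
    exact Ideal.mul_mem_right _ _ (Ideal.mem_span_singleton_self h)

theorem isNormalPairLocal_of_maximalIdeal_notMem_associatedPrimes {A : Type} [CommRing A]
    [IsLocalRing A] {h : A} (hh : h ∈ nonZeroDivisors A) (hm : h ∈ maximalIdeal A)
    (hass : maximalIdeal A ∉ associatedPrimes A (A ⧸ Ideal.span {h})) :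
    IsNormalPairLocal A := by
  intro S _ φ _ ⟨n, hker, hcoker⟩ hassS
  let _ := φ.toAlgebra
  have hinj : Function.Injective φ := (injective_iff_map_eq_zero φ).mpr fun x hx =>
    mem_nonZeroDivisors_iff_left.mp (pow_mem hh n) x (hker x hx _ (Ideal.pow_mem_pow hm n))
  refine ⟨hinj, fun s => ?_⟩
  by_contra! hs
  have hs₁ : s ∉ (1 : Submodule A S) := by
    rw [Submodule.mem_one]
    exact fun ⟨a, ha⟩ => hs a ha
  have hms : ∀ y ∈ maximalIdeal A ^ n, y • s ∈ (1 : Submodule A S) := fun y hy =>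
    Submodule.mem_one.mpr (RingHom.mem_range.mp (hcoker s y hy))
  obtain ⟨t, ht, hmt⟩ := Submodule.exists_notMem_forall_smul_mem n hs₁ hms
  rcases exists_ne_zero_forall_smul_eq_zero_of_notMem_one hinj hh hm ht hmt with
    ⟨x, hx, hmx⟩ | ⟨u, hu, hmu⟩
  · exact hass ((maximalIdeal.isMaximal A).mem_associatedPrimes_of_forall_smul_eq_zero hx hmx)
  · exact hassS ((maximalIdeal.isMaximal A).mem_associatedPrimes_of_forall_smul_eq_zero hu hmu)

theorem mem_associatedPrimes_quotient_of_maximalIdeal_mem_atPrime {R : Type*} [CommRing R]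
    [IsNoetherianRing R] (I p : Ideal R) [p.IsPrime]
    (h : maximalIdeal (Localization.AtPrime p) ∈ associatedPrimes (Localization.AtPrime p)
      (Localization.AtPrime p ⧸ I.map (algebraMap R (Localization.AtPrime p)))) :
    p ∈ associatedPrimes R (R ⧸ I) := by
  rw [← Ideal.localized'_eq_map _ p.primeCompl] at h
  have := Module.associatedPrimes.comap_mem_associatedPrimes_of_mem_associatedPrimes_of_isLocalizedModule_of_fg
    (R' := Localization.AtPrime p) p.primeCompl
    (I.toLocalizedQuotient' (Localization.AtPrime p) p.primeCompl
      (Algebra.linearMap R (Localization.AtPrime p)))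
    _ h ((isNoetherianRing_iff_ideal_fg R).mp ‹_› _)
  rwa [← Ideal.under_def, Localization.AtPrime.under_maximalIdeal] at this

theorem mem_associatedPrimes_of_not_isNormalPairLocal {R : Type} [CommRing R] [IsNoetherianRing R]
    {g : R} (hg : g ∈ nonZeroDivisors R) (p : Ideal R) [p.IsPrime] (hgp : g ∈ p)
    (hp : ¬IsNormalPairLocal (Localization.AtPrime p)) :
    p ∈ associatedPrimes R (R ⧸ Ideal.span {g}) := by
  by_contra hass
  refine hp (isNormalPairLocal_of_maximalIdeal_notMem_associatedPrimes
    (IsLocalization.nonZeroDivisors_le_comap p.primeCompl _ hg)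
    ((IsLocalization.AtPrime.to_map_mem_maximal_iff _ p g).mpr hgp) fun H => hass ?_)
  refine mem_associatedPrimes_quotient_of_maximalIdeal_mem_atPrime _ p ?_
  rwa [Ideal.map_span, Set.image_singleton]

theorem stmt10 (R : Type) [CommRing R] [IsNoetherianRing R]
    (g : R) (hg : g ∈ nonZeroDivisors R)
    (W : Set (PrimeSpectrum R))
    (hWg : W ⊆ PrimeSpectrum.zeroLocus ({g} : Set R)) :
    {p : PrimeSpectrum R | p ∈ W ∧ ¬ IsNormalPairLocal (Localization.AtPrime p.asIdeal)}.Finite ∧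
    ∀ p ∈ W, ¬ IsNormalPairLocal (Localization.AtPrime p.asIdeal) →
      (p.asIdeal ∈ (Ideal.span ({g} : Set R)).minimalPrimes ∨
        p.asIdeal ∈ associatedPrimes R (R ⧸ Ideal.span ({g} : Set R))) := by
  have hass : ∀ p ∈ W, ¬ IsNormalPairLocal (Localization.AtPrime p.asIdeal) →
      p.asIdeal ∈ associatedPrimes R (R ⧸ Ideal.span ({g} : Set R)) := fun p hp =>
    mem_associatedPrimes_of_not_isNormalPairLocal hg p.asIdeal
      (Set.singleton_subset_iff.mp (hWg hp))
  refine ⟨?_, fun p hp hnn => .inr (hass p hp hnn)⟩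
  have hfin := (associatedPrimes.finite R (R ⧸ Ideal.span {g})).preimage
    fun _ _ _ _ => PrimeSpectrum.ext
  exact hfin.subset fun p ⟨hp, hnn⟩ => hass p hp hnn
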